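/- Let c ∈ ℝ. For all populations X and Y with V_CLc(X) > V_CLc(Y), there exists N ∈ ℕ such that every population Z with Avg(Z) = c and |Z| ≥ N satisfies Avg(X + Z) > Avg(Y + Z). -/
import Mathlib


/-- The size of a population: total number of welfare subjects. -/
noncomputable def psize (X : ℝ →₀ ℕ) : ℕ := X.sum fun _ n => n

/-- Total welfare of a population. -/
noncomputable def ptot (X : ℝ →₀ ℕ) : ℝ := X.sum fun w n => (n : ℝ) * w

/-- Average welfare of a population. -/
noncomputable def pavg (X : ℝ →₀ ℕ) : ℝ := ptot X / (psize X : ℝ)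

/-- Critical-level utilitarian value with critical level `c`. -/
noncomputable def vcl (c : ℝ) (X : ℝ →₀ ℕ) : ℝ := ptot X - c * (psize X : ℝ)

lemma psize_pos {X : ℝ →₀ ℕ} (hX : X ≠ 0) : 0 < psize X := by
  rcases Finsupp.ne_iff.mp hX with ⟨a, ha⟩
  simp only [Finsupp.coe_zero, Pi.zero_apply] at ha
  have hmem : a ∈ X.support := Finsupp.mem_support_iff.mpr ha
  have h := Finset.single_le_sum (f := fun w => X w) (fun i _ => Nat.zero_le _) hmem
  exact lt_of_lt_of_le (Nat.pos_of_ne_zero ha) h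

lemma psize_add (X Z : ℝ →₀ ℕ) : psize (X + Z) = psize X + psize Z :=
  Finsupp.sum_add_index' (fun _ => rfl) (fun _ _ _ => rfl)

lemma ptot_add (X Z : ℝ →₀ ℕ) : ptot (X + Z) = ptot X + ptot Z :=
  Finsupp.sum_add_index' (by simp) (fun a m n => by push_cast; ring)

theorem stmt_19 (c : ℝ) (X Y : ℝ →₀ ℕ) (hX : X ≠ 0) (hY : Y ≠ 0)
    (hV : vcl c X > vcl c Y) :
    ∃ N : ℕ, ∀ Z : ℝ →₀ ℕ, Z ≠ 0 → pavg Z = c → psize Z ≥ N →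
      pavg (X + Z) > pavg (Y + Z) := by
  have hnX : (0:ℝ) < psize X := by exact_mod_cast psize_pos hX
  have hnY : (0:ℝ) < psize Y := by exact_mod_cast psize_pos hY
  have hd : 0 < vcl c X - vcl c Y := by linarith
  obtain ⟨N, hN⟩ := exists_nat_gt ((ptot Y * psize X - ptot X * psize Y) / (vcl c X - vcl c Y))
  refine ⟨N, fun Z hZ hZavg hZs => ?_⟩
  have hsZ : (0:ℝ) < psize Z := by exact_mod_cast psize_pos hZ
  have htotZ : ptot Z = c * psize Z := by
    have := hZavg
    unfold pavg at this
    field_simp at this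
    linarith [this]
  have hs : (N:ℝ) ≤ psize Z := by exact_mod_cast hZs
  have hkey : ptot Y * psize X - ptot X * psize Y < (psize Z : ℝ) * (vcl c X - vcl c Y) := by
    rw [div_lt_iff₀ hd] at hN
    nlinarith
  unfold pavg
  rw [psize_add, psize_add, ptot_add, ptot_add, htotZ]
  push_cast
  rw [gt_iff_lt, div_lt_div_iff₀ (by linarith) (by linarith)]
  unfold vcl at hkey
  nlinarith [hkey]
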